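/- arXiv:2306.13861 — 4 statements merged into one kernel-verified Lean document; each statement's English description precedes it below -/
import Mathlib

section
/- (Lemma 3.2(a)) Let {ε_n}_{n≥1} be a sequence of {0,1}-valued random variables, S_n = ∑_{k=1}^n ε_k, and let λ be any real random variable on the same probability space. Then for all integers m ≥ 1 and s ≥ 2, d( (S_{ms} − S_{m(s−1)})/m, λ ) ≤ (2s − 1) [ d( S_{ms}/(ms), λ ) + d( S_{m(s−1)}/(m(s−1)), λ ) ]. -/
open MeasureTheory ProbabilityTheory Filter Real
open scoped Classical NNReal ENNReal

/-- The Ky Fan metric: `d(X,Y) = inf {ε > 0 : P(|X - Y| > ε) < ε}`. -/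
noncomputable def kyFan {Ω : Type} [MeasurableSpace Ω] (P : Measure Ω)
    (X Y : Ω → ℝ) : ℝ :=
  sInf {e : ℝ | 0 < e ∧ P {ω | e < |X ω - Y ω|} < ENNReal.ofReal e}

lemma kyFan_set_nonempty {Ω : Type} [MeasurableSpace Ω] (P : Measure Ω)
    [IsProbabilityMeasure P] (X Y : Ω → ℝ) :
    {e : ℝ | 0 < e ∧ P {ω | e < |X ω - Y ω|} < ENNReal.ofReal e}.Nonempty := by
  refine ⟨2, by norm_num, ?_⟩
  calc P {ω | (2:ℝ) < |X ω - Y ω|} ≤ 1 := prob_le_one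
    _ < ENNReal.ofReal 2 := by
        rw [show (1 : ℝ≥0∞) = ENNReal.ofReal 1 by simp]
        exact ENNReal.ofReal_lt_ofReal_iff_of_nonneg (by norm_num) |>.mpr (by norm_num)

lemma kyFan_bddBelow {Ω : Type} [MeasurableSpace Ω] (P : Measure Ω) (X Y : Ω → ℝ) :
    BddBelow {e : ℝ | 0 < e ∧ P {ω | e < |X ω - Y ω|} < ENNReal.ofReal e} :=
  ⟨0, fun x hx => le_of_lt hx.1⟩

lemma kyFan_triangle_scaled {Ω : Type} [MeasurableSpace Ω] (P : Measure Ω)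
    [IsProbabilityMeasure P] (X A B lam : Ω → ℝ) (c : ℝ) (hc : 1 ≤ c)
    (h : ∀ ω, |X ω - lam ω| ≤ c * (|A ω - lam ω| + |B ω - lam ω|)) :
    kyFan P X lam ≤ c * (kyFan P A lam + kyFan P B lam) := by
  have hc0 : 0 < c := lt_of_lt_of_le one_pos hc
  refine le_of_forall_pos_le_add fun δ hδ => ?_
  set δ' := δ / (2 * c) with hδ'def
  have hδ' : 0 < δ' := by positivity
  have hA : sInf {e : ℝ | 0 < e ∧ P {ω | e < |A ω - lam ω|} < ENNReal.ofReal e}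
      < kyFan P A lam + δ' := by
    simpa [kyFan] using lt_add_of_pos_right (kyFan P A lam) hδ'
  obtain ⟨a, ha, halt⟩ := exists_lt_of_csInf_lt (kyFan_set_nonempty P A lam) hA
  have hB : sInf {e : ℝ | 0 < e ∧ P {ω | e < |B ω - lam ω|} < ENNReal.ofReal e}
      < kyFan P B lam + δ' := by
    simpa [kyFan] using lt_add_of_pos_right (kyFan P B lam) hδ'
  obtain ⟨b, hb, hblt⟩ := exists_lt_of_csInf_lt (kyFan_set_nonempty P B lam) hB
  obtain ⟨ha0, haP⟩ := ha
  obtain ⟨hb0, hbP⟩ := hb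
  -- c * (a + b) is in the set for X
  have hmem : (c * (a + b)) ∈
      {e : ℝ | 0 < e ∧ P {ω | e < |X ω - lam ω|} < ENNReal.ofReal e} := by
    constructor
    · positivity
    · have hsub : {ω | c * (a + b) < |X ω - lam ω|} ⊆
          {ω | a < |A ω - lam ω|} ∪ {ω | b < |B ω - lam ω|} := by
        intro ω hω
        by_contra hcon
        simp only [Set.mem_union, Set.mem_setOf_eq, not_or, not_lt] at hcon
        have := h ω
        have : |X ω - lam ω| ≤ c * (a + b) := by
          calc |X ω - lam ω| ≤ c * (|A ω - lam ω| + |B ω - lam ω|) := h ω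
            _ ≤ c * (a + b) := by
                have := hcon.1; have := hcon.2
                nlinarith [abs_nonneg (A ω - lam ω), abs_nonneg (B ω - lam ω)]
        exact absurd hω (not_lt.mpr this)
      calc P {ω | c * (a + b) < |X ω - lam ω|}
          ≤ P ({ω | a < |A ω - lam ω|} ∪ {ω | b < |B ω - lam ω|}) := measure_mono hsub
        _ ≤ P {ω | a < |A ω - lam ω|} + P {ω | b < |B ω - lam ω|} := measure_union_le _ _
        _ < ENNReal.ofReal a + ENNReal.ofReal b := ENNReal.add_lt_add haP hbP
        _ = ENNReal.ofReal (a + b) := (ENNReal.ofReal_add ha0.le hb0.le).symm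
        _ ≤ ENNReal.ofReal (c * (a + b)) := by
            apply ENNReal.ofReal_le_ofReal
            nlinarith
  have hle : kyFan P X lam ≤ c * (a + b) :=
    csInf_le (kyFan_bddBelow P X lam) hmem
  have : c * (a + b) ≤ c * (kyFan P A lam + kyFan P B lam) + δ := by
    have hkA : a < kyFan P A lam + δ' := halt
    have hkB : b < kyFan P B lam + δ' := hblt
    have : c * (a + b) ≤ c * (kyFan P A lam + kyFan P B lam + 2 * δ') := by
      nlinarith
    calc c * (a + b) ≤ c * (kyFan P A lam + kyFan P B lam + 2 * δ') := this
      _ = c * (kyFan P A lam + kyFan P B lam) + c * (2 * δ') := by ring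
      _ = c * (kyFan P A lam + kyFan P B lam) + δ := by
          rw [hδ'def]; field_simp
  linarith

theorem stmt15
    {Ω : Type} [MeasurableSpace Ω] (P : Measure Ω) [IsProbabilityMeasure P]
    (ε : ℕ → Ω → ℝ) (hε : ∀ n ω, ε n ω = 0 ∨ ε n ω = 1)
    (lam : Ω → ℝ)
    (m s : ℕ) (hm : 1 ≤ m) (hs : 2 ≤ s) :
    kyFan P (fun ω =>
        ((∑ k ∈ Finset.Icc 1 (m * s), ε k ω) -
          ∑ k ∈ Finset.Icc 1 (m * (s - 1)), ε k ω) / m) lam ≤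
      (2 * (s : ℝ) - 1) *
        (kyFan P (fun ω => (∑ k ∈ Finset.Icc 1 (m * s), ε k ω) / (m * s : ℕ)) lam +
          kyFan P (fun ω =>
            (∑ k ∈ Finset.Icc 1 (m * (s - 1)), ε k ω) / (m * (s - 1) : ℕ)) lam) := by
  have hS : (2 : ℝ) ≤ (s : ℝ) := by exact_mod_cast hs
  have hM : (1 : ℝ) ≤ (m : ℝ) := by exact_mod_cast hm
  apply kyFan_triangle_scaled P _ _ _ lam (2 * (s : ℝ) - 1) (by linarith)
  intro ω
  set a := ∑ k ∈ Finset.Icc 1 (m * s), ε k ω with ha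
  set b := ∑ k ∈ Finset.Icc 1 (m * (s - 1)), ε k ω with hb
  set L := lam ω with hL
  have hcast : ((m * (s - 1) : ℕ) : ℝ) = (m : ℝ) * ((s : ℝ) - 1) := by
    have : ((s - 1 : ℕ) : ℝ) = (s : ℝ) - 1 := by
      rw [Nat.cast_sub (by omega)]; simp
    push_cast [this]; ring
  have hm0 : (m : ℝ) ≠ 0 := by linarith
  have hs0 : (s : ℝ) ≠ 0 := by linarith
  have hs1 : (s : ℝ) - 1 ≠ 0 := by intro hcon; linarith [sub_eq_zero.mp hcon]
  have key : (a - b) / (m : ℝ) - L =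
      (s : ℝ) * (a / ((m * s : ℕ) : ℝ) - L)
        - ((s : ℝ) - 1) * (b / ((m * (s - 1) : ℕ) : ℝ) - L) := by
    rw [hcast]
    push_cast
    field_simp
    ring
  rw [key]
  have h1 : |(s : ℝ) * (a / ((m * s : ℕ) : ℝ) - L)
        - ((s : ℝ) - 1) * (b / ((m * (s - 1) : ℕ) : ℝ) - L)|
      ≤ (s : ℝ) * |a / ((m * s : ℕ) : ℝ) - L|
        + ((s : ℝ) - 1) * |b / ((m * (s - 1) : ℕ) : ℝ) - L| := by
    calc |(s : ℝ) * (a / ((m * s : ℕ) : ℝ) - L)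
          - ((s : ℝ) - 1) * (b / ((m * (s - 1) : ℕ) : ℝ) - L)|
        ≤ |(s : ℝ) * (a / ((m * s : ℕ) : ℝ) - L)|
          + |((s : ℝ) - 1) * (b / ((m * (s - 1) : ℕ) : ℝ) - L)| := abs_sub _ _
      _ = (s : ℝ) * |a / ((m * s : ℕ) : ℝ) - L|
          + ((s : ℝ) - 1) * |b / ((m * (s - 1) : ℕ) : ℝ) - L| := by
          rw [abs_mul, abs_mul, abs_of_pos (by linarith : (0:ℝ) < (s:ℝ)),
            abs_of_pos (by linarith : (0:ℝ) < (s:ℝ) - 1)]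
  refine h1.trans ?_
  nlinarith [abs_nonneg (a / ((m * s : ℕ) : ℝ) - L),
    abs_nonneg (b / ((m * (s - 1) : ℕ) : ℝ) - L)]
end

section
/- Let {ε_n}_{n≥1} be a sequence of {0,1}-valued random variables with S_n = ∑_{k=1}^n ε_k, and suppose S_n/n → λ in probability, where λ is a random variable with 0 ≤ λ ≤ 1 a.s. Then for all 0 < c < d ≤ 1, lim_{n→∞} ( ∑_{j=⌊nc⌋+1}^{⌊nd⌋} P(ε_j = 1) ) / ( n(d − c) ) = E(λ), and consequently lim_{n→∞} ( ∑_{j=⌊nc⌋+1}^{⌊nd⌋} P(ε_j = 0) ) / ( n(d − c) ) = E(1 − λ). -/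
open MeasureTheory ProbabilityTheory Filter Real
open scoped Classical NNReal ENNReal

theorem myBddConv {Ω : Type} [MeasurableSpace Ω] (P : Measure Ω) [IsProbabilityMeasure P]
    {f : ℕ → Ω → ℝ} {g : Ω → ℝ}
    (hfm : ∀ n, AEStronglyMeasurable (f n) P)
    (hbd : ∀ n ω, |f n ω| ≤ 1)
    (h : TendstoInMeasure P f atTop g) :
    Tendsto (fun n => ∫ ω, f n ω ∂P) atTop (nhds (∫ ω, g ω ∂P)) := by
  apply tendsto_of_subseq_tendsto
  intro ns hns
  have h' : TendstoInMeasure P (fun i => f (ns i)) atTop g := by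
    intro δ hδ
    exact (h δ hδ).comp hns
  obtain ⟨ms, hms, hae⟩ := h'.exists_seq_tendsto_ae
  refine ⟨ms, ?_⟩
  apply tendsto_integral_of_dominated_convergence (fun _ => (1 : ℝ))
  · exact fun n => hfm _
  · exact integrable_const 1
  · exact fun n => Eventually.of_forall (fun ω => by
      simpa [Real.norm_eq_abs] using hbd (ns (ms n)) ω)
  · exact hae

theorem stmt17
    {Ω : Type} [MeasurableSpace Ω] (P : Measure Ω) [IsProbabilityMeasure P]
    (ε : ℕ → Ω → Bool) (hεmeas : ∀ n, Measurable (ε n))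
    (lam : Ω → ℝ) (hlam : Measurable lam)
    (hlam01 : ∀ᵐ ω ∂P, lam ω ∈ Set.Icc (0 : ℝ) 1)
    -- `S_n / n → λ` in probability
    (hS : TendstoInMeasure P
      (fun n ω => (∑ k ∈ Finset.Icc 1 n, (if ε k ω then (1 : ℝ) else 0)) / n)
      atTop lam)
    (c d : ℝ) (hc : 0 < c) (hcd : c < d) (hd : d ≤ 1) :
    Tendsto (fun n : ℕ =>
        (∑ j ∈ Finset.Icc (⌊(n : ℝ) * c⌋₊ + 1) ⌊(n : ℝ) * d⌋₊,
          (P {ω | ε j ω = true}).toReal) / ((n : ℝ) * (d - c)))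
      atTop (nhds (∫ ω, lam ω ∂P)) ∧
    Tendsto (fun n : ℕ =>
        (∑ j ∈ Finset.Icc (⌊(n : ℝ) * c⌋₊ + 1) ⌊(n : ℝ) * d⌋₊,
          (P {ω | ε j ω = false}).toReal) / ((n : ℝ) * (d - c)))
      atTop (nhds (∫ ω, (1 - lam ω) ∂P)) := by
  have hd0 : (0:ℝ) < d := hc.trans hcd
  have hdc : (0:ℝ) < d - c := sub_pos.mpr hcd
  set p : ℕ → ℝ := fun j => (P {ω | ε j ω = true}).toReal with hp
  set T : ℕ → ℝ := fun m => ∑ j ∈ Finset.Icc 1 m, p j with hT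
  set L : ℝ := ∫ ω, lam ω ∂P with hL
  have hset : ∀ k, MeasurableSet {ω | ε k ω = true} :=
    fun k => (hεmeas k) (measurableSet_singleton true)
  have hind : ∀ k, (fun ω => if ε k ω then (1:ℝ) else 0)
      = Set.indicator {ω | ε k ω = true} (fun _ => (1:ℝ)) := by
    intro k; funext ω; by_cases h : ε k ω <;> simp [Set.indicator_apply, h]
  -- measurability of S_n/n
  have hSmeas : ∀ n, Measurable (fun ω =>
      (∑ k ∈ Finset.Icc 1 n, (if ε k ω then (1 : ℝ) else 0)) / n) := by
    intro n
    apply Measurable.div_const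
    apply Finset.measurable_sum
    intro k _
    exact Measurable.ite (hset k) measurable_const measurable_const
  -- bound
  have hbd : ∀ n ω, |(∑ k ∈ Finset.Icc 1 n, (if ε k ω then (1 : ℝ) else 0)) / (n:ℝ)| ≤ 1 := by
    intro n ω
    rcases Nat.eq_zero_or_pos n with h | h
    · simp [h]
    have h0 : (0:ℝ) ≤ ∑ k ∈ Finset.Icc 1 n, (if ε k ω then (1 : ℝ) else 0) :=
      Finset.sum_nonneg (fun k _ => by split <;> norm_num)
    have h1 : (∑ k ∈ Finset.Icc 1 n, (if ε k ω then (1 : ℝ) else 0)) ≤ n := by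
      calc (∑ k ∈ Finset.Icc 1 n, (if ε k ω then (1 : ℝ) else 0))
          ≤ ∑ k ∈ Finset.Icc 1 n, (1:ℝ) :=
            Finset.sum_le_sum (fun k _ => by split <;> norm_num)
        _ = n := by simp [Nat.card_Icc]
    rw [abs_div, abs_of_nonneg h0, Nat.abs_cast]
    exact div_le_one_of_le₀ h1 (Nat.cast_nonneg n)
  -- the expectation of S_n/n is T n / n
  have hInt : ∀ n, ∫ ω, (∑ k ∈ Finset.Icc 1 n, (if ε k ω then (1 : ℝ) else 0)) / n ∂P
      = T n / n := by
    intro n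
    rw [integral_div]
    congr 1
    rw [integral_finset_sum]
    · refine Finset.sum_congr rfl (fun k _ => ?_)
      rw [hind k, integral_indicator_const _ (hset k)]
      simp [hp, smul_eq_mul]
      rfl
    · intro k _
      rw [hind k]
      exact (integrable_const 1).indicator (hset k)
  have hf : Tendsto (fun n => T n / n) atTop (nhds L) := by
    have := myBddConv P (f := fun n ω =>
        (∑ k ∈ Finset.Icc 1 n, (if ε k ω then (1 : ℝ) else 0)) / n)
      (fun n => (hSmeas n).aestronglyMeasurable) hbd hS
    exact this.congr hInt
  -- floor facts
  have hfloorc : Tendsto (fun n : ℕ => ⌊(n:ℝ) * c⌋₊) atTop atTop := by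
    simpa [mul_comm] using tendsto_nat_floor_mul_atTop c hc
  have hfloord : Tendsto (fun n : ℕ => ⌊(n:ℝ) * d⌋₊) atTop atTop := by
    simpa [mul_comm] using tendsto_nat_floor_mul_atTop d hd0
  have hc' : Tendsto (fun n : ℕ => (⌊(n:ℝ) * c⌋₊ : ℝ) / n) atTop (nhds c) := by
    have := (tendsto_nat_floor_mul_div_atTop hc.le).comp
      (tendsto_natCast_atTop_atTop (R := ℝ))
    simpa [Function.comp_def, mul_comm] using this
  have hd' : Tendsto (fun n : ℕ => (⌊(n:ℝ) * d⌋₊ : ℝ) / n) atTop (nhds d) := by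
    have := (tendsto_nat_floor_mul_div_atTop hd0.le).comp
      (tendsto_natCast_atTop_atTop (R := ℝ))
    simpa [Function.comp_def, mul_comm] using this
  have hfc : Tendsto (fun n : ℕ => T ⌊(n:ℝ) * c⌋₊ / (⌊(n:ℝ) * c⌋₊ : ℝ)) atTop (nhds L) :=
    hf.comp hfloorc
  have hfd : Tendsto (fun n : ℕ => T ⌊(n:ℝ) * d⌋₊ / (⌊(n:ℝ) * d⌋₊ : ℝ)) atTop (nhds L) :=
    hf.comp hfloord
  -- eventual equality for the first limit
  have hab : ∀ n : ℕ, ⌊(n:ℝ) * c⌋₊ ≤ ⌊(n:ℝ) * d⌋₊ := fun n =>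
    Nat.floor_mono (by nlinarith [Nat.cast_nonneg (α := ℝ) n])
  have hsum : ∀ n : ℕ,
      (∑ j ∈ Finset.Icc (⌊(n : ℝ) * c⌋₊ + 1) ⌊(n : ℝ) * d⌋₊, p j)
        = T ⌊(n:ℝ) * d⌋₊ - T ⌊(n:ℝ) * c⌋₊ := by
    intro n
    have h1 : ∀ m : ℕ, T m = ∑ j ∈ Finset.Ioc 0 m, p j := by
      intro m; rw [hT]
      exact Finset.sum_congr (Finset.Icc_add_one_left_eq_Ioc 0 m).symm (fun _ _ => rfl)
    rw [h1, h1, Finset.Icc_add_one_left_eq_Ioc, eq_sub_iff_add_eq, add_comm]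
    exact Finset.sum_Ioc_consecutive _ (Nat.zero_le _) (hab n)
  -- first limit
  have key1 : Tendsto (fun n : ℕ =>
      (∑ j ∈ Finset.Icc (⌊(n : ℝ) * c⌋₊ + 1) ⌊(n : ℝ) * d⌋₊, p j) / ((n : ℝ) * (d - c)))
      atTop (nhds L) := by
    have hlim : Tendsto (fun n : ℕ =>
        ((⌊(n:ℝ) * d⌋₊ : ℝ) / n * (T ⌊(n:ℝ) * d⌋₊ / (⌊(n:ℝ) * d⌋₊ : ℝ))
          - (⌊(n:ℝ) * c⌋₊ : ℝ) / n * (T ⌊(n:ℝ) * c⌋₊ / (⌊(n:ℝ) * c⌋₊ : ℝ))) / (d - c))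
        atTop (nhds ((d * L - c * L) / (d - c))) :=
      ((hd'.mul hfd).sub (hc'.mul hfc)).div_const _
    have hval : (d * L - c * L) / (d - c) = L := by
      field_simp
    rw [hval] at hlim
    apply hlim.congr'
    have h1 : ∀ᶠ n : ℕ in atTop, 1 ≤ ⌊(n:ℝ) * c⌋₊ := hfloorc.eventually_ge_atTop 1
    filter_upwards [h1, eventually_ge_atTop 1] with n hn1 hn2
    have ha0 : (⌊(n:ℝ) * c⌋₊ : ℝ) ≠ 0 := by positivity
    have hb0 : (⌊(n:ℝ) * d⌋₊ : ℝ) ≠ 0 := by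
      have : 1 ≤ ⌊(n:ℝ) * d⌋₊ := le_trans hn1 (hab n)
      positivity
    have hn0 : (n : ℝ) ≠ 0 := by positivity
    rw [hsum n]
    field_simp
  constructor
  · exact key1
  -- second limit
  have hcompl : ∀ j, (P {ω | ε j ω = false}).toReal = 1 - p j := by
    intro j
    have hs : {ω | ε j ω = false} = {ω | ε j ω = true}ᶜ := by
      ext ω; simp
    rw [hs, prob_compl_eq_one_sub (hset j),
      ENNReal.toReal_sub_of_le prob_le_one ENNReal.one_ne_top]
    simp [hp]
  have hint_lam : Integrable lam P := by
    refine Integrable.mono' (integrable_const 1) hlam.aestronglyMeasurable ?_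
    filter_upwards [hlam01] with ω h
    rw [Real.norm_eq_abs, abs_le]
    exact ⟨by linarith [h.1], h.2⟩
  have hint2 : ∫ ω, (1 - lam ω) ∂P = 1 - L := by
    rw [integral_sub (integrable_const 1) hint_lam]
    simp [hL]
  rw [hint2]
  have hcount : Tendsto (fun n : ℕ =>
      ((⌊(n:ℝ) * d⌋₊ : ℝ) / n - (⌊(n:ℝ) * c⌋₊ : ℝ) / n) / (d - c)) atTop (nhds 1) := by
    have := (hd'.sub hc').div_const (d - c)
    rwa [div_self hdc.ne'] at this
  have := hcount.sub key1
  apply this.congr'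
  filter_upwards [eventually_ge_atTop 1] with n hn2
  have hn0 : (n : ℝ) ≠ 0 := by positivity
  have hcard : (∑ j ∈ Finset.Icc (⌊(n : ℝ) * c⌋₊ + 1) ⌊(n : ℝ) * d⌋₊,
      (P {ω | ε j ω = false}).toReal)
      = ((⌊(n:ℝ) * d⌋₊ : ℝ) - (⌊(n:ℝ) * c⌋₊ : ℝ))
        - ∑ j ∈ Finset.Icc (⌊(n : ℝ) * c⌋₊ + 1) ⌊(n : ℝ) * d⌋₊, p j := by
    rw [Finset.sum_congr rfl (fun j _ => hcompl j), Finset.sum_sub_distrib,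
      Finset.sum_const, nsmul_eq_mul, mul_one, Nat.card_Icc,
      Nat.cast_sub (Nat.add_le_add_right (hab n) 1)]
    push_cast
    ring
  rw [hcard]
  have hb' : (⌊(n:ℝ) * d⌋₊ : ℝ) / n - (⌊(n:ℝ) * c⌋₊ : ℝ) / n
      = ((⌊(n:ℝ) * d⌋₊ : ℝ) - (⌊(n:ℝ) * c⌋₊ : ℝ)) / n := (sub_div _ _ _).symm
  field_simp
end

section
/- Let {X_n}_{n≥1} be a sequence of random variables each having the standard normal distribution, and let {ε_n}_{n≥1} be a sequence of {0,1}-valued random variables independent of the sequence X with S_n = ∑_{k=1}^n ε_k and S_n/n → λ in probability, where 0 ≤ λ ≤ 1 a.s. Then for every x ∈ ℝ and all 0 < c < d ≤ 1, the expected number of observed exceedances satisfies lim_{n→∞} E[ #{1 ≤ j ≤ n : j/n ∈ (c, d], X_j > u_n(x), ε_j = 1} ] = (d − c) E(λ) e^{−x}, and likewise lim_{n→∞} E[ #{1 ≤ j ≤ n : j/n ∈ (c, d], X_j > u_n(x), ε_j = 0} ] = (d − c) E(1 − λ) e^{−x}. -/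
open MeasureTheory ProbabilityTheory Filter Real
open scoped Classical NNReal ENNReal

/-- The normalizing levels `u_n(x) = x/a_n + b_n` with `a_n = (2 ln n)^{1/2}` and
`b_n = a_n - (ln ln n + ln (4π))/(2 a_n)`. -/
noncomputable def un (n : ℕ) (x : ℝ) : ℝ :=
  x / Real.sqrt (2 * Real.log n) +
    (Real.sqrt (2 * Real.log n) -
      (Real.log (Real.log n) + Real.log (4 * Real.pi)) / (2 * Real.sqrt (2 * Real.log n)))

noncomputable def phi' (y : ℝ) : ℝ := gaussianPDFReal 0 1 y

lemma phi'_eq (y : ℝ) : phi' y = (Real.sqrt (2 * π))⁻¹ * Real.exp (-(y^2)/2) := by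
  simp [phi', gaussianPDFReal]

lemma phi'_nonneg (y : ℝ) : 0 ≤ phi' y := gaussianPDFReal_nonneg 0 1 y

lemma hasDerivAt_phi' (y : ℝ) : HasDerivAt phi' (-y * phi' y) y := by
  have h1 : HasDerivAt (fun y : ℝ => -(y^2)/2) (-y) y := by
    have := ((hasDerivAt_pow 2 y).neg).div_const 2
    simpa using this.congr_deriv (by ring)
  have h2 := (h1.exp).const_mul ((Real.sqrt (2 * π))⁻¹)
  have : phi' = fun y => (Real.sqrt (2 * π))⁻¹ * Real.exp (-(y^2)/2) := funext phi'_eq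
  rw [this]
  refine h2.congr_deriv ?_
  beta_reduce; ring

lemma hasDerivAt_G {y : ℝ} (hy : y ≠ 0) :
    HasDerivAt (fun y => -(phi' y / y)) (phi' y * (1 + 1/y^2)) y := by
  have h := ((hasDerivAt_phi' y).div (hasDerivAt_id y) hy).neg
  refine h.congr_deriv ?_
  simp only [id]
  field_simp
  ring

lemma tendsto_phi'_atTop : Tendsto phi' atTop (nhds 0) := by
  have h1 : Tendsto (fun y : ℝ => -(y^2)/2) atTop atBot := by
    have h0 : Tendsto (fun y:ℝ => y^2/2) atTop atTop :=
      (tendsto_pow_atTop two_ne_zero).atTop_div_const (by norm_num)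
    have heq : (fun y:ℝ => -(y^2)/2) = Neg.neg ∘ fun y:ℝ => y^2/2 := by
      funext y; simp [neg_div]
    rw [heq]; exact tendsto_neg_atTop_atBot.comp h0
  have h2 := Real.tendsto_exp_atBot.comp h1
  have := h2.const_mul ((Real.sqrt (2 * π))⁻¹)
  simpa [funext phi'_eq, Function.comp] using this

lemma tendsto_G : Tendsto (fun y => -(phi' y / y)) atTop (nhds 0) := by
  have := (tendsto_phi'_atTop.div_atTop tendsto_id).neg
  simpa using this

lemma key_int (t : ℝ) (ht : 0 < t) :
    IntegrableOn (fun y => phi' y * (1 + 1/y^2)) (Set.Ioi t) := by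
  apply integrableOn_Ioi_deriv_of_nonneg' (g := fun y => -(phi' y / y)) (l := 0)
  · exact fun y hy => hasDerivAt_G (lt_of_lt_of_le ht hy).ne'
  · intro y hy
    have : (0:ℝ) ≤ 1 + 1/y^2 := by positivity
    exact mul_nonneg (phi'_nonneg y) this
  · exact tendsto_G

lemma key_eq (t : ℝ) (ht : 0 < t) :
    ∫ y in Set.Ioi t, phi' y * (1 + 1/y^2) = phi' t / t := by
  have := integral_Ioi_of_hasDerivAt_of_nonneg' (g := fun y => -(phi' y / y)) (l := 0)
    (fun y hy => hasDerivAt_G (lt_of_lt_of_le ht hy).ne')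
    (fun y hy => mul_nonneg (phi'_nonneg y) (by positivity)) tendsto_G
  simpa using this

lemma phi'_intOn (s : Set ℝ) : IntegrableOn phi' s :=
  (integrable_gaussianPDFReal 0 1).integrableOn

lemma tail_upper (t : ℝ) (ht : 0 < t) : ∫ y in Set.Ioi t, phi' y ≤ phi' t / t := by
  rw [← key_eq t ht]
  refine setIntegral_mono_on (phi'_intOn _) (key_int t ht) measurableSet_Ioi fun y hy => ?_
  exact le_mul_of_one_le_right (phi'_nonneg y) (le_add_of_nonneg_right (by positivity))

lemma tail_lower (t : ℝ) (ht : 0 < t) :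
    phi' t / t / (1 + 1/t^2) ≤ ∫ y in Set.Ioi t, phi' y := by
  set T := ∫ y in Set.Ioi t, phi' y with hT
  have hJint : IntegrableOn (fun y => phi' y * (1/y^2)) (Set.Ioi t) := by
    have heq : (fun y => phi' y * (1/y^2)) = (fun y => phi' y * (1+1/y^2) - phi' y) := by
      funext y; ring
    rw [heq]; exact (key_int t ht).sub (phi'_intOn _)
  have hsplit : phi' t / t = T + ∫ y in Set.Ioi t, phi' y * (1/y^2) := by
    rw [← key_eq t ht, ← integral_add (phi'_intOn _) hJint]
    congr 1; funext y; ring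
  have hJ : ∫ y in Set.Ioi t, phi' y * (1/y^2) ≤ (1/t^2) * T := by
    rw [hT, ← integral_const_mul]
    refine setIntegral_mono_on hJint (by exact (phi'_intOn _).const_mul _) measurableSet_Ioi
      fun y hy => ?_
    have hy' : t < y := hy
    rw [mul_comm ((1:ℝ)/t^2)]
    refine mul_le_mul_of_nonneg_left ?_ (phi'_nonneg y)
    apply one_div_le_one_div_of_le (by positivity)
    nlinarith
  have hTpos : 0 < 1 + 1/t^2 := by positivity
  rw [div_le_iff₀ hTpos]
  calc phi' t / t ≤ T + (1/t^2) * T := by linarith [hsplit, hJ]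
    _ = T * (1 + 1/t^2) := by ring

lemma gauss_tail (t : ℝ) :
    ((gaussianReal 0 1) (Set.Ioi t)).toReal = ∫ y in Set.Ioi t, phi' y := by
  rw [gaussianReal_apply_eq_integral 0 one_ne_zero, ENNReal.toReal_ofReal
    (setIntegral_nonneg measurableSet_Ioi fun y _ => gaussianPDFReal_nonneg 0 1 y)]
  rfl

lemma tendsto_log_div_sqrt : Tendsto (fun y : ℝ => Real.log y / Real.sqrt (2*y)) atTop (nhds 0) := by
  have h := (isLittleO_log_rpow_atTop (by norm_num : (0:ℝ) < 1/2)).tendsto_div_nhds_zero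
  have h2 : Tendsto (fun y : ℝ => (Real.sqrt 2)⁻¹ * (Real.log y / y ^ ((1:ℝ)/2))) atTop (nhds 0) := by
    simpa using h.const_mul (Real.sqrt 2)⁻¹
  refine h2.congr' ?_
  filter_upwards [eventually_ge_atTop (0:ℝ)] with y hy
  rw [Real.sqrt_mul (by norm_num) y, ← Real.sqrt_eq_rpow]
  have h2 : Real.sqrt 2 ≠ 0 := by positivity
  field_simp

noncomputable def aa (n : ℕ) : ℝ := Real.sqrt (2 * Real.log n)
noncomputable def LL (n : ℕ) : ℝ := (Real.log (Real.log n) + Real.log (4*π))/2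
noncomputable def cc (x : ℝ) (n : ℕ) : ℝ := (x - LL n) / aa n

lemma tendsto_two_log : Tendsto (fun n : ℕ => 2 * Real.log n) atTop atTop := by
  have := Real.tendsto_log_atTop.comp (tendsto_natCast_atTop_atTop (R := ℝ))
  exact this.const_mul_atTop (by norm_num)

lemma tendsto_aa : Tendsto aa atTop atTop := by
  have h := (tendsto_rpow_atTop (by norm_num : (0:ℝ) < 1/2)).comp tendsto_two_log
  refine h.congr fun n => ?_
  simp [aa, Function.comp, Real.sqrt_eq_rpow]

lemma tendsto_inv_aa : Tendsto (fun n => (aa n)⁻¹) atTop (nhds 0) :=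
  tendsto_aa.inv_tendsto_atTop

lemma tendsto_cc (x : ℝ) : Tendsto (cc x) atTop (nhds 0) := by
  have hmid : Tendsto (fun n : ℕ => Real.log (Real.log n) / aa n) atTop (nhds 0) := by
    have := tendsto_log_div_sqrt.comp (Real.tendsto_log_atTop.comp (tendsto_natCast_atTop_atTop (R := ℝ)))
    refine this.congr fun n => ?_
    simp [aa, Function.comp]
  have h := ((tendsto_inv_aa.const_mul x).sub (hmid.div_const 2)).sub
    (tendsto_inv_aa.const_mul (Real.log (4*π)/2))
  have h2 : Tendsto (fun n : ℕ => x * (aa n)⁻¹ - (Real.log (Real.log n) / aa n)/2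
      - (Real.log (4*π)/2) * (aa n)⁻¹) atTop (nhds 0) := by simpa using h
  refine h2.congr fun n => ?_
  simp only [cc, LL]
  ring

lemma log_ge_one {n : ℕ} (hn : 3 ≤ n) : 1 ≤ Real.log n := by
  have h3 : (3:ℝ) ≤ n := by exact_mod_cast hn
  calc (1:ℝ) ≤ Real.log 3 := by
        rw [Real.le_log_iff_exp_le (by norm_num)]
        calc Real.exp 1 ≤ 2.7182818286 := (Real.exp_one_lt_d9).le
          _ ≤ 3 := by norm_num
    _ ≤ Real.log n := Real.log_le_log (by norm_num) h3

lemma un_eq (x : ℝ) {n : ℕ} (hn : 3 ≤ n) : un n x = aa n + cc x n := by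
  have hl := log_ge_one hn
  have ha : 0 < aa n := Real.sqrt_pos.2 (by nlinarith)
  simp only [un, aa, cc, LL] at *
  field_simp
  ring

lemma n_phi_eq (x : ℝ) {n : ℕ} (hn : 3 ≤ n) :
    (n:ℝ) * phi' (un n x) = Real.exp (-x) * aa n * Real.exp (-(cc x n)^2/2) := by
  have hl := log_ge_one hn
  have hlpos : 0 < Real.log n := by linarith
  have ha2 : (aa n)^2 = 2 * Real.log n := Real.sq_sqrt (by linarith)
  have hapos : 0 < aa n := Real.sqrt_pos.2 (by linarith)
  have hane : aa n ≠ 0 := hapos.ne'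
  have hnpos : (0:ℝ) < n := by positivity
  have hac : aa n * cc x n = x - LL n := by
    simp only [cc]; field_simp
  have hsq : -(un n x)^2/2 = -Real.log n - x + LL n - (cc x n)^2/2 := by
    rw [un_eq x hn]
    have : (aa n + cc x n)^2 = (aa n)^2 + 2*(aa n * cc x n) + (cc x n)^2 := by ring
    rw [this, ha2, hac]
    ring
  have hphi : phi' (un n x) = (Real.sqrt (2*π))⁻¹ *
      (Real.exp (-Real.log n) * (Real.exp (-x) * (Real.exp (LL n) * Real.exp (-(cc x n)^2/2)))) := by
    rw [phi'_eq, hsq, ← Real.exp_add, ← Real.exp_add, ← Real.exp_add]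
    ring_nf
  have hexpL : Real.exp (LL n) = Real.sqrt (Real.log n) * Real.sqrt (4*π) := by
    have h1 : Real.log (Real.sqrt (Real.log n)) = Real.log (Real.log n) / 2 :=
      Real.log_sqrt (by linarith)
    have h2 : Real.log (Real.sqrt (4*π)) = Real.log (4*π) / 2 :=
      Real.log_sqrt (by positivity)
    rw [← Real.exp_log (show (0:ℝ) < Real.sqrt (Real.log n) * Real.sqrt (4*π) by positivity),
      Real.log_mul (by positivity) (by positivity), h1, h2]
    simp only [LL]
    ring_nf
  have hexplog : Real.exp (-Real.log n) = (n:ℝ)⁻¹ := by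
    rw [Real.exp_neg, Real.exp_log hnpos]
  have hsqrt : (Real.sqrt (2*π))⁻¹ * (Real.sqrt (Real.log n) * Real.sqrt (4*π)) = aa n := by
    have h4 : Real.sqrt (4*π) = Real.sqrt 2 * Real.sqrt (2*π) := by
      rw [show (4:ℝ)*π = 2*(2*π) by ring, Real.sqrt_mul (by norm_num)]
    have h2pi : Real.sqrt (2*π) ≠ 0 := by positivity
    rw [h4]
    have : aa n = Real.sqrt 2 * Real.sqrt (Real.log n) := by
      rw [aa, Real.sqrt_mul (by norm_num)]
    rw [this]
    field_simp
  rw [hphi, hexpL, hexplog]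
  calc (n:ℝ) * ((Real.sqrt (2*π))⁻¹ * ((n:ℝ)⁻¹ * (Real.exp (-x) *
        (Real.sqrt (Real.log n) * Real.sqrt (4*π) * Real.exp (-(cc x n)^2/2)))))
      = ((n:ℝ) * (n:ℝ)⁻¹) * (((Real.sqrt (2*π))⁻¹ * (Real.sqrt (Real.log n) * Real.sqrt (4*π))) *
        (Real.exp (-x) * Real.exp (-(cc x n)^2/2))) := by ring
    _ = 1 * (aa n * (Real.exp (-x) * Real.exp (-(cc x n)^2/2))) := by
        rw [mul_inv_cancel₀ hnpos.ne', hsqrt]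
    _ = Real.exp (-x) * aa n * Real.exp (-(cc x n)^2/2) := by ring

lemma tendsto_un (x : ℝ) : Tendsto (fun n => un n x) atTop atTop := by
  refine tendsto_atTop_mono' atTop ?_ (tendsto_atTop_add_const_right atTop (-1) tendsto_aa)
  filter_upwards [eventually_ge_atTop 3,
    (tendsto_cc x).eventually (eventually_gt_nhds (by norm_num : (-1:ℝ) < 0))] with n hn3 hc
  rw [un_eq x hn3]; linarith

lemma tendsto_A (x : ℝ) :
    Tendsto (fun n : ℕ => (n:ℝ) * phi' (un n x) / un n x) atTop (nhds (Real.exp (-x))) := by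
  have hE : Tendsto (fun n => Real.exp (-(cc x n)^2/2)) atTop (nhds 1) := by
    have h2 : Tendsto (fun n => -(cc x n)^2/2) atTop (nhds 0) := by
      simpa using (((tendsto_cc x).pow 2).neg.div_const 2)
    have := (Real.continuous_exp.tendsto 0).comp h2
    simpa [Function.comp_def] using this
  have hua : Tendsto (fun n => un n x / aa n) atTop (nhds 1) := by
    have hca : Tendsto (fun n => cc x n / aa n) atTop (nhds 0) := by
      have := (tendsto_cc x).mul tendsto_inv_aa
      simpa [div_eq_mul_inv] using this
    have h1 : Tendsto (fun n => 1 + cc x n / aa n) atTop (nhds 1) := by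
      simpa using (tendsto_const_nhds (x := (1:ℝ)) (f := atTop)).add hca
    refine h1.congr' ?_
    filter_upwards [eventually_ge_atTop 3] with n hn3
    have hl := log_ge_one hn3
    have hane : aa n ≠ 0 := (Real.sqrt_pos.2 (by nlinarith)).ne'
    rw [un_eq x hn3]
    field_simp
  have hau : Tendsto (fun n => aa n / un n x) atTop (nhds 1) := by
    have := hua.inv₀ one_ne_zero
    simp only [inv_div, inv_one] at this
    exact this
  have hmain : Tendsto (fun n => Real.exp (-x) * (aa n / un n x) * Real.exp (-(cc x n)^2/2))
      atTop (nhds (Real.exp (-x))) := by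
    have := ((tendsto_const_nhds (x := Real.exp (-x)) (f := atTop)).mul hau).mul hE
    simpa using this
  refine hmain.congr' ?_
  filter_upwards [eventually_ge_atTop 3] with n hn3
  rw [n_phi_eq x hn3]
  ring

lemma tendsto_n_tail (x : ℝ) :
    Tendsto (fun n : ℕ => (n:ℝ) * ∫ y in Set.Ioi (un n x), phi' y) atTop
      (nhds (Real.exp (-x))) := by
  have htun := tendsto_un x
  have hA := tendsto_A x
  have hone : Tendsto (fun n : ℕ => 1 + 1/(un n x)^2) atTop (nhds 1) := by
    have hsq : Tendsto (fun n : ℕ => (un n x)^2) atTop atTop := by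
      simpa [sq] using htun.atTop_mul_atTop₀ htun
    have h0 := hsq.inv_tendsto_atTop
    have := (tendsto_const_nhds (x := (1:ℝ)) (f := atTop)).add h0
    simpa [one_div] using this
  have hlow : Tendsto (fun n : ℕ => ((n:ℝ) * phi' (un n x) / un n x) / (1 + 1/(un n x)^2))
      atTop (nhds (Real.exp (-x))) := by simpa [Pi.div_def] using hA.div hone one_ne_zero
  refine tendsto_of_tendsto_of_tendsto_of_le_of_le' hlow hA ?_ ?_
  · filter_upwards [htun.eventually (eventually_gt_atTop 0)] with n hpos
    have h1 := tail_lower (un n x) hpos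
    have h2 : ((n:ℝ) * phi' (un n x) / un n x) / (1 + 1/(un n x)^2)
        = (n:ℝ) * (phi' (un n x) / un n x / (1 + 1/(un n x)^2)) := by ring
    rw [h2]
    exact mul_le_mul_of_nonneg_left h1 (Nat.cast_nonneg n)
  · filter_upwards [htun.eventually (eventually_gt_atTop 0)] with n hpos
    have := mul_le_mul_of_nonneg_left (tail_upper _ hpos) (Nat.cast_nonneg (α := ℝ) n)
    calc (n:ℝ) * ∫ y in Set.Ioi (un n x), phi' y ≤ (n:ℝ) * (phi' (un n x) / un n x) := this
      _ = (n:ℝ) * phi' (un n x) / un n x := by ring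

lemma tendsto_n_tail' (x : ℝ) :
    Filter.Tendsto (fun n : ℕ => (n:ℝ) * ((gaussianReal 0 1) (Set.Ioi (un n x))).toReal) atTop
      (nhds (Real.exp (-x))) := by
  refine (tendsto_n_tail x).congr fun n => ?_
  rw [gauss_tail]

theorem stmt18
    {Ω : Type} [MeasurableSpace Ω] (P : Measure Ω) [IsProbabilityMeasure P]
    (X : ℕ → Ω → ℝ) (ε : ℕ → Ω → Bool) (lam : Ω → ℝ)
    (hXmeas : ∀ n, Measurable (X n))
    (hεmeas : ∀ n, Measurable (ε n))
    (hlam : Measurable lam)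
    -- each `X n` is standard Gaussian
    (hstd : ∀ n, Measure.map (X n) P = gaussianReal 0 1)
    -- independence of the sequences `X` and `ε`
    (hindep : IndepFun (fun ω => fun n => X n ω) (fun ω => fun n => ε n ω) P)
    (hlam01 : ∀ᵐ ω ∂P, lam ω ∈ Set.Icc (0 : ℝ) 1)
    -- `S_n / n → λ` in probability
    (hS : TendstoInMeasure P
      (fun n ω => (∑ k ∈ Finset.Icc 1 n, (if ε k ω then (1 : ℝ) else 0)) / n)
      atTop lam)
    (x : ℝ) (c d : ℝ) (hc : 0 < c) (hcd : c < d) (hd : d ≤ 1) :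
    Tendsto (fun n : ℕ =>
        ∫ ω, (((Finset.Icc 1 n).filter
          (fun j : ℕ => (j : ℝ) / n ∈ Set.Ioc c d ∧ un n x < X j ω ∧ ε j ω = true)).card : ℝ) ∂P)
      atTop (nhds ((d - c) * (∫ ω, lam ω ∂P) * Real.exp (-x))) ∧
    Tendsto (fun n : ℕ =>
        ∫ ω, (((Finset.Icc 1 n).filter
          (fun j : ℕ => (j : ℝ) / n ∈ Set.Ioc c d ∧ un n x < X j ω ∧ ε j ω = false)).card : ℝ) ∂P)
      atTop (nhds ((d - c) * (∫ ω, (1 - lam ω) ∂P) * Real.exp (-x))) := by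
  -- notation
  set I : ℝ := ∫ ω, lam ω ∂P with hI
  set q : ℕ → ℝ := fun n => ((gaussianReal 0 1) (Set.Ioi (un n x))).toReal with hq
  set S : ℕ → Ω → ℝ := fun j ω => ∑ k ∈ Finset.Icc 1 j, (if ε k ω then (1 : ℝ) else 0) with hSdef
  set g : ℕ → ℝ := fun j => ∫ ω, S j ω / j ∂P with hgdef
  set p : ℕ → ℝ := fun j => (P ((ε j) ⁻¹' {true})).toReal with hpdef
  set kk : ℕ → ℕ := fun n => ⌊c * n⌋₊ with hkkdef
  set mm : ℕ → ℕ := fun n => ⌊d * n⌋₊ with hmmdef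
  set F : ℕ → Finset ℕ := fun n => (Finset.Icc 1 n).filter (fun j => (j : ℝ) / n ∈ Set.Ioc c d)
    with hFdef
  have hεset : ∀ j (b : Bool), MeasurableSet ((ε j) ⁻¹' {b}) :=
    fun j b => (hεmeas j) (measurableSet_singleton b)
  have hSmeas : ∀ j, Measurable (S j) := by
    intro j
    apply Finset.measurable_sum
    intro k _
    exact Measurable.ite (hεset k true) measurable_const measurable_const
  -- the σ-sums
  set σ : ℕ → ℝ := fun j => ∑ k ∈ Finset.Icc 1 j, p k with hσdef
  have hintS : ∀ j, ∫ ω, S j ω ∂P = σ j := by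
    intro j
    rw [hSdef]
    rw [integral_finset_sum]
    · refine Finset.sum_congr rfl fun k _ => ?_
      have : (fun ω => if ε k ω then (1:ℝ) else 0)
          = Set.indicator ((ε k) ⁻¹' {true}) (fun _ => (1:ℝ)) := by
        funext ω
        simp [Set.indicator_apply]
      rw [this, integral_indicator_const _ (hεset k true)]
      simp [hpdef, measureReal_def]
    · intro k _
      have : (fun ω => if ε k ω then (1:ℝ) else 0)
          = Set.indicator ((ε k) ⁻¹' {true}) (fun _ => (1:ℝ)) := by
        funext ω; simp [Set.indicator_apply]
      rw [this]
      exact (integrable_const 1).indicator (hεset k true)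
  have hσg : ∀ j : ℕ, σ j = j * g j := by
    intro j
    rcases Nat.eq_zero_or_pos j with rfl | hj
    · simp [hσdef]
    · have : g j = σ j / j := by
        rw [hgdef]
        simp only
        rw [integral_div, hintS]
      rw [this]
      field_simp
  -- bound for S j / j
  have hSbound : ∀ (j : ℕ) (ω : Ω), ‖S j ω / j‖ ≤ 1 := by
    intro j ω
    have h0 : 0 ≤ S j ω := Finset.sum_nonneg fun k _ => by split <;> norm_num
    have h1 : S j ω ≤ j := by
      calc S j ω ≤ ∑ k ∈ Finset.Icc 1 j, (1:ℝ) := by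
            refine Finset.sum_le_sum fun k _ => ?_
            split <;> norm_num
        _ = j := by simp [Nat.card_Icc]
    rcases Nat.eq_zero_or_pos j with rfl | hj
    · simp [hSdef]
    · have hjr : (0:ℝ) < j := by exact_mod_cast hj
      rw [Real.norm_eq_abs, abs_div, abs_of_nonneg h0, abs_of_nonneg hjr.le, div_le_one hjr]
      exact h1
  -- convergence of g
  have hg_tendsto : Tendsto g atTop (nhds I) := by
    apply tendsto_of_subseq_tendsto
    intro ns hns
    have hcomp : TendstoInMeasure P (fun i ω => S (ns i) ω / (ns i)) atTop lam :=
      fun e he => (hS e he).comp hns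
    obtain ⟨ms, -, hae⟩ := hcomp.exists_seq_tendsto_ae
    refine ⟨ms, ?_⟩
    exact tendsto_integral_of_dominated_convergence (fun _ => (1:ℝ))
      (fun i => ((hSmeas _).div_const _).aestronglyMeasurable) (integrable_const 1)
      (fun i => ae_of_all _ fun ω => hSbound _ ω) hae
  -- identification of the index set
  have hF : ∀ n : ℕ, 1 ≤ n → F n = Finset.Ioc (kk n) (mm n) := by
    intro n hn
    have hn0 : (0:ℝ) < n := by exact_mod_cast hn
    ext j
    simp only [hFdef, Finset.mem_filter, Finset.mem_Icc, Finset.mem_Ioc, Set.mem_Ioc]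
    constructor
    · rintro ⟨⟨h1, h2⟩, hcj, hjd⟩
      constructor
      · rw [hkkdef]; simp only
        rw [Nat.floor_lt (mul_nonneg hc.le (Nat.cast_nonneg n))]
        rwa [lt_div_iff₀ hn0] at hcj
      · rw [hmmdef]; simp only
        rw [div_le_iff₀ hn0] at hjd
        exact Nat.le_floor (by exact_mod_cast hjd)
    · rintro ⟨h1, h2⟩
      have hj1 : 1 ≤ j := le_trans (Nat.succ_le_succ (Nat.zero_le _)) h1
      have hjd : (j:ℝ) ≤ d * n :=
        le_trans (by exact_mod_cast Nat.cast_le.2 h2) (Nat.floor_le (mul_nonneg (by linarith) (Nat.cast_nonneg n)))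
      have hcj : c * n < j := by
        have := h1
        rw [hkkdef] at this; simp only at this
        exact (Nat.floor_lt (mul_nonneg hc.le (Nat.cast_nonneg n))).1 this
      refine ⟨⟨hj1, ?_⟩, ?_, ?_⟩
      · have : (j:ℝ) ≤ n := hjd.trans (by nlinarith)
        exact_mod_cast this
      · rwa [lt_div_iff₀ hn0]
      · rw [div_le_iff₀ hn0]; exact hjd
  -- independence of X j and ε j
  have hindep' : ∀ j, IndepFun (X j) (ε j) P := by
    intro j
    have := hindep.comp (measurable_pi_apply j) (measurable_pi_apply j)
    exact this
  -- probability factorization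
  have hprob : ∀ n j (b : Bool),
      (P ((X j ⁻¹' Set.Ioi (un n x)) ∩ (ε j ⁻¹' {b}))).toReal = q n * (P ((ε j) ⁻¹' {b})).toReal := by
    intro n j b
    rw [(hindep' j).measure_inter_preimage_eq_mul _ _ measurableSet_Ioi
      (measurableSet_singleton b)]
    rw [ENNReal.toReal_mul]
    congr 1
    rw [← Measure.map_apply (hXmeas j) measurableSet_Ioi, hstd j]
  -- expected counts
  have hint : ∀ (n : ℕ) (b : Bool),
      ∫ ω, (((Finset.Icc 1 n).filter
          (fun j : ℕ => (j : ℝ) / n ∈ Set.Ioc c d ∧ un n x < X j ω ∧ ε j ω = b)).card : ℝ) ∂P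
        = q n * ∑ j ∈ F n, (P ((ε j) ⁻¹' {b})).toReal := by
    intro n b
    have hAmeas : ∀ j : ℕ, MeasurableSet ((X j ⁻¹' Set.Ioi (un n x)) ∩ (ε j ⁻¹' {b})) :=
      fun j => ((hXmeas j) measurableSet_Ioi).inter (hεset j b)
    have hcard : ∀ ω, (((Finset.Icc 1 n).filter
          (fun j : ℕ => (j : ℝ) / n ∈ Set.Ioc c d ∧ un n x < X j ω ∧ ε j ω = b)).card : ℝ)
        = ∑ j ∈ F n, Set.indicator ((X j ⁻¹' Set.Ioi (un n x)) ∩ (ε j ⁻¹' {b}))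
            (fun _ => (1:ℝ)) ω := by
      intro ω
      rw [← Finset.filter_filter, Finset.card_filter]
      push_cast
      refine Finset.sum_congr rfl fun j hj => ?_
      by_cases h : un n x < X j ω ∧ ε j ω = b
      · simp [h, Set.indicator_apply, Set.mem_inter_iff, h.1, h.2]
      · rw [if_neg h, Set.indicator_apply, if_neg]
        intro hmem
        exact h ⟨hmem.1, hmem.2⟩
    calc ∫ ω, (((Finset.Icc 1 n).filter
          (fun j : ℕ => (j : ℝ) / n ∈ Set.Ioc c d ∧ un n x < X j ω ∧ ε j ω = b)).card : ℝ) ∂P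
        = ∫ ω, ∑ j ∈ F n, Set.indicator ((X j ⁻¹' Set.Ioi (un n x)) ∩ (ε j ⁻¹' {b}))
            (fun _ => (1:ℝ)) ω ∂P := by
          exact integral_congr_ae (ae_of_all _ hcard)
      _ = ∑ j ∈ F n, (P ((X j ⁻¹' Set.Ioi (un n x)) ∩ (ε j ⁻¹' {b}))).toReal := by
          rw [integral_finset_sum _ (fun j _ => (integrable_const (1:ℝ)).indicator (hAmeas j))]
          refine Finset.sum_congr rfl fun j _ => ?_
          rw [integral_indicator_const _ (hAmeas j)]
          simp [measureReal_def]
      _ = q n * ∑ j ∈ F n, (P ((ε j) ⁻¹' {b})).toReal := by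
          rw [Finset.mul_sum]
          exact Finset.sum_congr rfl fun j _ => hprob n j b
  -- floor asymptotics
  have hfloor_div : ∀ r : ℝ, 0 < r →
      Tendsto (fun n : ℕ => (⌊r * n⌋₊ : ℝ) / n) atTop (nhds r) := by
    intro r hr
    apply tendsto_of_tendsto_of_tendsto_of_le_of_le' (g := fun n : ℕ => r - 1/(n:ℝ))
      (h := fun _ : ℕ => r)
    · have h0 : Tendsto (fun n : ℕ => 1/(n:ℝ)) atTop (nhds 0) :=
        tendsto_one_div_atTop_nhds_zero_nat
      simpa using (tendsto_const_nhds (x := r) (f := atTop)).sub h0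
    · exact tendsto_const_nhds
    · filter_upwards [eventually_ge_atTop 1] with n hn
      have hn0 : (0:ℝ) < n := by exact_mod_cast hn
      rw [le_div_iff₀ hn0]
      have h1 := Nat.sub_one_lt_floor (r * n)
      calc (r - 1/(n:ℝ)) * n = r * n - 1 := by field_simp
        _ ≤ ⌊r * (n:ℝ)⌋₊ := h1.le
    · filter_upwards [eventually_ge_atTop 1] with n hn
      have hn0 : (0:ℝ) < n := by exact_mod_cast hn
      rw [div_le_iff₀ hn0]
      exact Nat.floor_le (mul_nonneg hr.le (Nat.cast_nonneg n))
  have hkk_div : Tendsto (fun n : ℕ => (kk n : ℝ)/n) atTop (nhds c) := hfloor_div c hc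
  have hmm_div : Tendsto (fun n : ℕ => (mm n : ℝ)/n) atTop (nhds d) :=
    hfloor_div d (hc.trans hcd)
  have hkk_atTop : Tendsto kk atTop atTop :=
    tendsto_nat_floor_atTop.comp ((tendsto_natCast_atTop_atTop (R := ℝ)).const_mul_atTop hc)
  have hmm_atTop : Tendsto mm atTop atTop :=
    tendsto_nat_floor_atTop.comp
      ((tendsto_natCast_atTop_atTop (R := ℝ)).const_mul_atTop (hc.trans hcd))
  have hgkk : Tendsto (fun n => g (kk n)) atTop (nhds I) := hg_tendsto.comp hkk_atTop
  have hgmm : Tendsto (fun n => g (mm n)) atTop (nhds I) := hg_tendsto.comp hmm_atTop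
  have hkm : ∀ n : ℕ, kk n ≤ mm n := fun n =>
    Nat.floor_le_floor (mul_le_mul_of_nonneg_right hcd.le (Nat.cast_nonneg n))
  have hIcc_Ioc : ∀ j : ℕ, Finset.Icc 1 j = Finset.Ioc 0 j := fun j => rfl
  have hsplit : ∀ n : ℕ, 1 ≤ n → ∑ j ∈ F n, p j = σ (mm n) - σ (kk n) := by
    intro n hn
    rw [hF n hn]
    have hcons := Finset.sum_Ioc_consecutive p (Nat.zero_le (kk n)) (hkm n)
    have h1 : σ (kk n) = ∑ j ∈ Finset.Ioc 0 (kk n), p j :=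
      Finset.sum_congr (Finset.Icc_add_one_left_eq_Ioc 0 _) fun _ _ => rfl
    have h2 : σ (mm n) = ∑ j ∈ Finset.Ioc 0 (mm n), p j :=
      Finset.sum_congr (Finset.Icc_add_one_left_eq_Ioc 0 _) fun _ _ => rfl
    rw [h1, h2]
    linarith [hcons]
  have hcardF : ∀ n : ℕ, 1 ≤ n → ((F n).card : ℝ) = (mm n : ℝ) - (kk n : ℝ) := by
    intro n hn
    rw [hF n hn, Nat.card_Ioc, Nat.cast_sub (hkm n)]
  -- the limit of n * q n
  have htail : Tendsto (fun n : ℕ => (n:ℝ) * q n) atTop (nhds (Real.exp (-x))) :=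
    tendsto_n_tail' x
  -- true part
  have hmain_true : Tendsto (fun n : ℕ => q n * ∑ j ∈ F n, p j) atTop
      (nhds ((d - c) * I * Real.exp (-x))) := by
    have hrhs : Tendsto (fun n : ℕ => ((n:ℝ) * q n) *
        (((mm n : ℝ)/n) * g (mm n) - ((kk n : ℝ)/n) * g (kk n))) atTop
        (nhds (Real.exp (-x) * (d * I - c * I))) :=
      htail.mul ((hmm_div.mul hgmm).sub (hkk_div.mul hgkk))
    have hval : (d - c) * I * Real.exp (-x) = Real.exp (-x) * (d * I - c * I) := by ring
    rw [hval]
    refine hrhs.congr' ?_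
    filter_upwards [eventually_ge_atTop 1] with n hn
    have hn0 : ((n:ℝ)) ≠ 0 := by exact_mod_cast Nat.one_le_iff_ne_zero.mp hn
    rw [hsplit n hn, hσg, hσg]
    field_simp
  -- false part
  have hfalse_p : ∀ j, (P ((ε j) ⁻¹' {false})).toReal = 1 - p j := by
    intro j
    have hcompl : (ε j) ⁻¹' {false} = ((ε j) ⁻¹' {true})ᶜ := by
      ext ω
      simp
    rw [hpdef]
    rw [hcompl, measure_compl (hεset j true) (measure_ne_top P _), measure_univ,
      ENNReal.toReal_sub_of_le prob_le_one ENNReal.one_ne_top, ENNReal.toReal_one]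
  have hlamInt : Integrable lam P := by
    refine (integrable_const (1:ℝ)).mono' hlam.aestronglyMeasurable ?_
    filter_upwards [hlam01] with ω h
    rw [Real.norm_eq_abs, abs_le]
    exact ⟨by linarith [h.1], by linarith [h.2]⟩
  have h1mI : ∫ ω, (1 - lam ω) ∂P = 1 - I := by
    rw [integral_sub (integrable_const 1) hlamInt]
    simp [hI]
  have hmain_false : Tendsto (fun n : ℕ => q n * ∑ j ∈ F n, (P ((ε j) ⁻¹' {false})).toReal) atTop
      (nhds ((d - c) * (∫ ω, (1 - lam ω) ∂P) * Real.exp (-x))) := by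
    have hrhs : Tendsto (fun n : ℕ => ((n:ℝ) * q n) *
        ((((mm n : ℝ)/n) - ((kk n : ℝ)/n)) -
          (((mm n : ℝ)/n) * g (mm n) - ((kk n : ℝ)/n) * g (kk n)))) atTop
        (nhds (Real.exp (-x) * ((d - c) - (d * I - c * I)))) :=
      htail.mul ((hmm_div.sub hkk_div).sub ((hmm_div.mul hgmm).sub (hkk_div.mul hgkk)))
    have hval : (d - c) * (∫ ω, (1 - lam ω) ∂P) * Real.exp (-x)
        = Real.exp (-x) * ((d - c) - (d * I - c * I)) := by
      rw [h1mI]; ring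
    rw [hval]
    refine hrhs.congr' ?_
    filter_upwards [eventually_ge_atTop 1] with n hn
    have hn0 : ((n:ℝ)) ≠ 0 := by exact_mod_cast Nat.one_le_iff_ne_zero.mp hn
    have hsum : ∑ j ∈ F n, (P ((ε j) ⁻¹' {false})).toReal
        = ((F n).card : ℝ) - ∑ j ∈ F n, p j := by
      rw [Finset.sum_congr rfl (fun j _ => hfalse_p j), Finset.sum_sub_distrib]
      simp
    rw [hsum, hcardF n hn, hsplit n hn, hσg, hσg]
    field_simp
  constructor
  · have heq : (fun n : ℕ => ∫ ω, (((Finset.Icc 1 n).filter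
        (fun j : ℕ => (j : ℝ) / n ∈ Set.Ioc c d ∧ un n x < X j ω ∧ ε j ω = true)).card : ℝ) ∂P)
        = fun n => q n * ∑ j ∈ F n, p j := funext fun n => hint n true
    rw [heq]
    exact hmain_true
  · have heq : (fun n : ℕ => ∫ ω, (((Finset.Icc 1 n).filter
        (fun j : ℕ => (j : ℝ) / n ∈ Set.Ioc c d ∧ un n x < X j ω ∧ ε j ω = false)).card : ℝ) ∂P)
        = fun n => q n * ∑ j ∈ F n, (P ((ε j) ⁻¹' {false})).toReal :=
      funext fun n => hint n false
    rw [heq]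
    exact hmain_false
end

section
/- Fix γ ∈ [0, ∞) and set ρ_n = γ / ln n and u_n(x, z) = (1 − ρ_n)^{−1/2} ( u_n(x) − ρ_n^{1/2} z ) for n large enough that ρ_n < 1. Then for all x, z ∈ ℝ, u_n(x, z) = u_n( x + γ − (2γ)^{1/2} z ) + o(a_n^{−1}) as n → ∞, and consequently lim_{n→∞} n ( 1 − Φ( u_n(x, z) ) ) = exp( −x − γ + (2γ)^{1/2} z ). -/
open MeasureTheory ProbabilityTheory Filter Real
open scoped Classical NNReal ENNReal

open Set

/-- `ρ_n = γ / ln n`. -/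
noncomputable def rho (γ : ℝ) (n : ℕ) : ℝ := γ / Real.log n

/-- `u_n(x, z) = (1 - ρ_n)^{-1/2} (u_n(x) - ρ_n^{1/2} z)`. -/
noncomputable def unz (γ : ℝ) (n : ℕ) (x z : ℝ) : ℝ :=
  (Real.sqrt (1 - rho γ n))⁻¹ * (un n x - Real.sqrt (rho γ n) * z)

/-- The standard normal distribution function `Φ`. -/
noncomputable def stdNormalCDF (t : ℝ) : ℝ := ((gaussianReal 0 1) (Set.Iic t)).toReal

noncomputable def phiSN (u : ℝ) : ℝ := Real.exp (-(1/2) * u ^ 2)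

lemma phiSN_integrable : Integrable phiSN := integrable_exp_neg_mul_sq (by norm_num)

lemma phiSN_pos (u : ℝ) : 0 < phiSN u := Real.exp_pos _

lemma phiSN_cont : Continuous phiSN := by
  unfold phiSN; continuity

lemma tendsto_neg_exp_sq : Tendsto (fun y : ℝ => Real.exp (-(1/2) * y ^ 2)) atTop (nhds 0) := by
  apply Real.tendsto_exp_atBot.comp
  have h : Tendsto (fun y : ℝ => y ^ 2) atTop atTop := tendsto_pow_atTop two_ne_zero
  exact h.const_mul_atTop_of_neg (by norm_num)

lemma integral_Ioi_mul_phiSN (t : ℝ) :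
    ∫ u in Ioi t, u * phiSN u = Real.exp (-(1/2) * t ^ 2) := by
  have hint : IntegrableOn (fun u : ℝ => u * phiSN u) (Ioi t) := by
    have := integrable_rpow_mul_exp_neg_mul_sq (b := 1/2) (by norm_num) (s := 1) (by norm_num)
    simpa [phiSN, Real.rpow_one] using this.integrableOn
  have hderiv : ∀ u ∈ Ici t, HasDerivAt (fun y : ℝ => -Real.exp (-(1/2) * y ^ 2))
      (u * phiSN u) u := by
    intro u _
    have h1 : HasDerivAt (fun y : ℝ => -(1/2) * y ^ 2) (-(1/2) * (2 * u ^ 1)) u :=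
      (hasDerivAt_pow 2 u).const_mul _
    have := (h1.exp).neg
    refine this.congr_deriv ?_
    simp [phiSN]; ring
  have := integral_Ioi_of_hasDerivAt_of_tendsto' hderiv hint tendsto_neg_exp_sq.neg
  simpa using this

lemma tail_upper_s19 {t : ℝ} (ht : 0 < t) :
    ∫ u in Ioi t, phiSN u ≤ Real.exp (-(1/2) * t ^ 2) / t := by
  have hint : IntegrableOn (fun u : ℝ => u * phiSN u) (Ioi t) := by
    have := integrable_rpow_mul_exp_neg_mul_sq (b := 1/2) (by norm_num) (s := 1) (by norm_num)
    simpa [phiSN, Real.rpow_one] using this.integrableOn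
  have h1 : ∫ u in Ioi t, phiSN u ≤ ∫ u in Ioi t, (u * phiSN u) / t := by
    apply setIntegral_mono_on phiSN_integrable.integrableOn (hint.div_const t) measurableSet_Ioi
    intro u hu
    rw [le_div_iff₀ ht]
    have : t ≤ u := le_of_lt hu
    nlinarith [phiSN_pos u]
  calc ∫ u in Ioi t, phiSN u ≤ ∫ u in Ioi t, (u * phiSN u) / t := h1
    _ = (∫ u in Ioi t, u * phiSN u) / t := by rw [integral_div]
    _ = Real.exp (-(1/2) * t ^ 2) / t := by rw [integral_Ioi_mul_phiSN]

lemma tail_lower_s19 {t : ℝ} (ht : 0 < t) :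
    t / (t ^ 2 + 1) * Real.exp (-(1/2) * t ^ 2) ≤ ∫ u in Ioi t, phiSN u := by
  set g' : ℝ → ℝ := fun u => (u ^ 4 + 2 * u ^ 2 - 1) / (u ^ 2 + 1) ^ 2 * phiSN u with hg'
  have hcont : Continuous g' := by
    apply Continuous.mul _ phiSN_cont
    apply Continuous.div (by continuity) (by continuity)
    intro u; positivity
  have hbound : ∀ u : ℝ, ‖g' u‖ ≤ ‖phiSN u‖ := by
    intro u
    rw [hg']
    simp only [norm_mul, Real.norm_eq_abs, abs_of_pos (phiSN_pos u)]
    have h2 : |(u ^ 4 + 2 * u ^ 2 - 1) / (u ^ 2 + 1) ^ 2| ≤ 1 := by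
      rw [abs_div, div_le_one (by positivity)]
      rw [abs_of_pos (by positivity : (0:ℝ) < (u ^ 2 + 1) ^ 2)]
      rw [abs_le]
      constructor <;> nlinarith [sq_nonneg u, sq_nonneg (u^2)]
    nlinarith [phiSN_pos u, abs_nonneg ((u ^ 4 + 2 * u ^ 2 - 1) / (u ^ 2 + 1) ^ 2)]
  have hint : IntegrableOn g' (Ioi t) := by
    apply Integrable.mono phiSN_integrable.integrableOn hcont.aestronglyMeasurable.restrict
    exact ae_of_all _ hbound
  have hderiv : ∀ u ∈ Ici t, HasDerivAt
      (fun y : ℝ => -(y / (y ^ 2 + 1)) * Real.exp (-(1/2) * y ^ 2)) (g' u) u := by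
    intro u _
    have hden : (u : ℝ) ^ 2 + 1 ≠ 0 := by positivity
    have h1 : HasDerivAt (fun y : ℝ => y / (y ^ 2 + 1))
        ((1 * (u ^ 2 + 1) - u * (2 * u ^ 1)) / (u ^ 2 + 1) ^ 2) u := by
      exact (hasDerivAt_id u).div ((hasDerivAt_pow 2 u).add_const 1) hden
    have h2 : HasDerivAt (fun y : ℝ => Real.exp (-(1/2) * y ^ 2))
        (Real.exp (-(1/2) * u ^ 2) * (-(1/2) * (2 * u ^ 1))) u :=
      ((hasDerivAt_pow 2 u).const_mul _).exp
    have := (h1.neg.mul h2)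
    refine this.congr_deriv ?_
    rw [hg']
    simp only [phiSN, Pi.neg_apply]
    field_simp
    ring
  have htends : Tendsto (fun y : ℝ => -(y / (y ^ 2 + 1)) * Real.exp (-(1/2) * y ^ 2))
      atTop (nhds 0) := by
    have h1 : Tendsto (fun y : ℝ => y / (y ^ 2 + 1)) atTop (nhds 0) := by
      apply tendsto_of_tendsto_of_tendsto_of_le_of_le' tendsto_const_nhds
        tendsto_inv_atTop_zero (f := fun y : ℝ => y / (y ^ 2 + 1))
      · filter_upwards [eventually_ge_atTop (0:ℝ)] with y hy
        positivity
      · filter_upwards [eventually_ge_atTop (1:ℝ)] with y hy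
        rw [div_le_iff₀ (by positivity), inv_mul_eq_div, le_div_iff₀ (by linarith)]
        nlinarith
    have := (h1.neg.mul tendsto_neg_exp_sq)
    simpa using this
  have key : ∫ u in Ioi t, g' u = t / (t ^ 2 + 1) * Real.exp (-(1/2) * t ^ 2) := by
    have := integral_Ioi_of_hasDerivAt_of_tendsto' hderiv hint htends
    rw [this]; ring
  rw [← key]
  apply setIntegral_mono_on hint phiSN_integrable.integrableOn measurableSet_Ioi
  intro u _
  rw [hg']
  have h2 : (u ^ 4 + 2 * u ^ 2 - 1) / (u ^ 2 + 1) ^ 2 ≤ 1 := by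
    rw [div_le_one (by positivity)]
    nlinarith [sq_nonneg u]
  nlinarith [phiSN_pos u, h2]

lemma gaussianPDFReal_eq (x : ℝ) :
    gaussianPDFReal 0 1 x = (Real.sqrt (2 * π))⁻¹ * phiSN x := by
  simp only [gaussianPDFReal, phiSN, NNReal.coe_one, mul_one, sub_zero]
  congr 1
  ring

lemma one_sub_cdf (t : ℝ) :
    1 - stdNormalCDF t = (Real.sqrt (2 * π))⁻¹ * ∫ u in Ioi t, phiSN u := by
  have h1 : stdNormalCDF t = ∫ x in Iic t, gaussianPDFReal 0 1 x := by
    rw [stdNormalCDF, gaussianReal_apply_eq_integral 0 one_ne_zero,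
      ENNReal.toReal_ofReal]
    exact setIntegral_nonneg measurableSet_Iic fun x _ => gaussianPDFReal_nonneg 0 1 x
  have h2 : (∫ x in Iic t, gaussianPDFReal 0 1 x) + ∫ x in Ioi t, gaussianPDFReal 0 1 x = 1 := by
    have := integral_add_compl (measurableSet_Iic (a := t)) (integrable_gaussianPDFReal 0 1)
    rw [compl_Iic] at this
    rw [this, integral_gaussianPDFReal_eq_one 0 one_ne_zero]
  have h3 : ∫ x in Ioi t, gaussianPDFReal 0 1 x = (Real.sqrt (2 * π))⁻¹ * ∫ u in Ioi t, phiSN u := by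
    rw [← integral_const_mul]
    exact setIntegral_congr_fun measurableSet_Ioi fun x _ => gaussianPDFReal_eq x
  rw [h1, ← h3]
  linarith

lemma hLtop : Tendsto (fun n : ℕ => Real.log n) atTop atTop :=
  Real.tendsto_log_atTop.comp tendsto_natCast_atTop_atTop

lemma key_limit (w : ℝ) (v : ℕ → ℝ)
    (h : Tendsto (fun n => (v n - un n w) * Real.sqrt (2 * Real.log n)) atTop (nhds 0)) :
    Tendsto (fun n : ℕ => (n : ℝ) * (1 - stdNormalCDF (v n))) atTop (nhds (Real.exp (-w))) := by
  set L : ℕ → ℝ := fun n => Real.log n with hL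
  set a : ℕ → ℝ := fun n => Real.sqrt (2 * L n) with ha
  set ε : ℕ → ℝ := fun n => (v n - un n w) * a n with hε
  set C : ℕ → ℝ := fun n => (Real.log (L n) + Real.log (4 * π)) / 2 with hC
  set d : ℕ → ℝ := fun n => w - C n + ε n with hd
  have hLt : Tendsto L atTop atTop := hLtop
  have ha_top : Tendsto a atTop atTop :=
    ((tendsto_rpow_atTop (by norm_num : (0:ℝ) < 1/2)).comp
      (hLt.const_mul_atTop two_pos)).congr fun n => (Real.sqrt_eq_rpow _).symm
  -- eventual basic facts
  have hev : ∀ᶠ n in atTop, 1 ≤ L n ∧ 1 ≤ (n : ℝ) :=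
    (hLt.eventually_ge_atTop 1).and
      (tendsto_natCast_atTop_atTop.eventually_ge_atTop (1:ℝ))
  have hinv_a : Tendsto (fun n => (a n)⁻¹) atTop (nhds 0) :=
    tendsto_inv_atTop_zero.comp ha_top
  -- v n = a n + d n / a n eventually
  have hv_eq : ∀ᶠ n in atTop, v n = a n + d n / a n := by
    filter_upwards [hev] with n hn
    have hLpos : 0 < L n := lt_of_lt_of_le one_pos hn.1
    have hapos : 0 < a n := Real.sqrt_pos.2 (by linarith)
    have ha2 : a n ^ 2 = 2 * L n := Real.sq_sqrt (by linarith)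
    have hane : Real.sqrt (2 * Real.log n) ≠ 0 := by
      simp only [ha, hL] at hapos; exact ne_of_gt hapos
    simp only [hd, hε, hC, ha, hL, un]
    field_simp
    ring
  -- C n / a n → 0
  have h1 : Tendsto (fun n => Real.log (L n) / a n) atTop (nhds 0) := by
    have base : Tendsto (fun l : ℝ => Real.log l / l ^ ((1:ℝ)/2)) atTop (nhds 0) :=
      (isLittleO_log_rpow_atTop one_half_pos).tendsto_div_nhds_zero
    have comp := (base.comp hLt).mul (tendsto_const_nhds (x := (Real.sqrt 2)⁻¹))
    rw [zero_mul] at comp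
    apply comp.congr
    intro n
    simp only [Function.comp_apply]
    rw [ha]
    simp only
    rw [Real.sqrt_mul (by norm_num : (0:ℝ) ≤ 2), ← Real.sqrt_eq_rpow]
    ring
  have hC0 : Tendsto (fun n => C n / a n) atTop (nhds 0) := by
    have := (h1.div_const 2).add (hinv_a.const_mul (Real.log (4 * π) / 2))
    rw [zero_div, zero_add, mul_zero] at this
    apply this.congr
    intro n
    rw [hC]
    ring
  -- d n / a n → 0 and d n / a n ^ 2 → 0
  have hd_a : Tendsto (fun n => d n / a n) atTop (nhds 0) := by
    have t1 : Tendsto (fun n => w * (a n)⁻¹ - C n / a n + ε n * (a n)⁻¹) atTop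
        (nhds (w * 0 - 0 + 0 * 0)) :=
      ((tendsto_const_nhds.mul hinv_a).sub hC0).add (h.mul hinv_a)
    norm_num at t1
    apply t1.congr
    intro n
    simp only [hd]
    ring
  have hd_a2 : Tendsto (fun n => d n / a n ^ 2) atTop (nhds 0) := by
    have := hd_a.mul hinv_a
    rw [zero_mul] at this
    apply this.congr
    intro n
    ring
  -- v n / a n → 1 and a n / v n → 1
  have hva : Tendsto (fun n => v n / a n) atTop (nhds 1) := by
    have t1 : Tendsto (fun n => 1 + d n / a n ^ 2) atTop (nhds (1 + 0)) :=
      tendsto_const_nhds.add hd_a2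
    rw [add_zero] at t1
    apply t1.congr'
    filter_upwards [hv_eq, hev] with n hn hev1
    have hLpos : 0 < L n := lt_of_lt_of_le one_pos hev1.1
    have hapos : 0 < a n := Real.sqrt_pos.2 (by linarith)
    rw [hn]
    field_simp
  have hav : Tendsto (fun n => a n / v n) atTop (nhds 1) := by
    have := hva.inv₀ one_ne_zero
    rw [inv_one] at this
    apply this.congr
    intro n
    rw [inv_div]
  have hv_top : Tendsto v atTop atTop := by
    have t1 : Tendsto (fun n => v n / a n * a n) atTop atTop :=
      hva.pos_mul_atTop one_pos ha_top
    apply t1.congr'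
    filter_upwards [hev] with n hev1
    have hLpos : 0 < L n := lt_of_lt_of_le one_pos hev1.1
    have hapos : 0 < a n := Real.sqrt_pos.2 (by linarith)
    field_simp
  -- the exponential factor
  have hexp : Tendsto (fun n => Real.exp (-w - ε n - d n ^ 2 / (2 * a n ^ 2))) atTop
      (nhds (Real.exp (-w))) := by
    have h2 : Tendsto (fun n => (d n / a n) ^ 2 / 2) atTop (nhds 0) := by
      have := (hd_a.mul hd_a).div_const 2
      norm_num at this
      apply this.congr
      intro n
      ring
    have hinner : Tendsto (fun n => -w - ε n - d n ^ 2 / (2 * a n ^ 2)) atTop (nhds (-w)) := by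
      have t1 : Tendsto (fun n => -w - ε n - (d n / a n) ^ 2 / 2) atTop (nhds (-w - 0 - 0)) :=
        (tendsto_const_nhds.sub h).sub h2
      norm_num at t1
      apply t1.congr
      intro n
      ring_nf
    exact (Real.continuous_exp.continuousAt (x := -w)).tendsto.comp hinner
  -- P n → exp (-w)
  have hP : Tendsto (fun n : ℕ =>
      (Real.sqrt (2 * π))⁻¹ * n * Real.exp (-(1/2) * v n ^ 2) / v n) atTop
      (nhds (Real.exp (-w))) := by
    have t1 := hav.mul hexp
    rw [one_mul] at t1
    apply t1.congr'
    filter_upwards [hv_eq, hev] with n hvn hev1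
    have hLpos : 0 < L n := lt_of_lt_of_le one_pos hev1.1
    have hapos : 0 < a n := Real.sqrt_pos.2 (by linarith)
    have ha2 : a n ^ 2 = 2 * L n := Real.sq_sqrt (by linarith)
    have hnpos : (0:ℝ) < n := lt_of_lt_of_le one_pos hev1.2
    have hv2 : v n ^ 2 = a n ^ 2 + 2 * d n + d n ^ 2 / a n ^ 2 := by
      rw [hvn]; field_simp; ring
    have hexpC : Real.exp (C n) = Real.sqrt (2 * π) * a n := by
      have h4pi : (0:ℝ) < 4 * π := by positivity
      have hCeq : C n = Real.log (4 * π * L n) * (1/2) := by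
        rw [hC]
        simp only
        rw [Real.log_mul (ne_of_gt h4pi) (ne_of_gt hLpos)]
        ring
      rw [hCeq, ← Real.rpow_def_of_pos (by positivity), ← Real.sqrt_eq_rpow,
        show 4 * π * L n = 2 * π * (2 * L n) by ring,
        Real.sqrt_mul (by positivity), ha]
    have hlogn : Real.log n = a n ^ 2 / 2 := by
      rw [ha2]; simp only [hL]; ring
    have hexp_eq : (n : ℝ) * Real.exp (-(1/2) * v n ^ 2) =
        Real.exp (C n) * Real.exp (-w - ε n - d n ^ 2 / (2 * a n ^ 2)) := by
      rw [← Real.exp_log hnpos, ← Real.exp_add, ← Real.exp_add]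
      congr 1
      rw [hlogn, hv2, hd]
      simp only
      field_simp
      ring
    have hs : Real.sqrt (2 * π) ≠ 0 := by positivity
    rw [mul_assoc, hexp_eq, hexpC, ← mul_assoc, ← mul_assoc, inv_mul_cancel₀ hs, one_mul]
    ring
  -- Q n → 1
  have hQ : Tendsto (fun n => (∫ u in Ioi (v n), phiSN u) * v n * Real.exp ((1/2) * v n ^ 2))
      atTop (nhds 1) := by
    have hv2top : Tendsto (fun n => v n ^ 2) atTop atTop :=
      (tendsto_pow_atTop two_ne_zero).comp hv_top
    have hlow : Tendsto (fun n => v n ^ 2 / (v n ^ 2 + 1)) atTop (nhds 1) := by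
      have t1 : Tendsto (fun n => 1 - (v n ^ 2 + 1)⁻¹) atTop (nhds (1 - 0)) :=
        tendsto_const_nhds.sub (tendsto_inv_atTop_zero.comp
          (tendsto_atTop_add_const_right _ 1 hv2top))
      rw [sub_zero] at t1
      apply t1.congr
      intro n
      have : v n ^ 2 + 1 ≠ 0 := by positivity
      field_simp
      ring
    apply tendsto_of_tendsto_of_tendsto_of_le_of_le' hlow tendsto_const_nhds
    · filter_upwards [hv_top.eventually_gt_atTop 0] with n hv
      have hl := tail_lower_s19 hv
      have hpos : (0:ℝ) < v n * Real.exp ((1/2) * v n ^ 2) := by positivity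
      calc v n ^ 2 / (v n ^ 2 + 1)
          = v n / (v n ^ 2 + 1) * Real.exp (-(1/2) * v n ^ 2) *
            (v n * Real.exp ((1/2) * v n ^ 2)) := by
            have hre : Real.exp (-(1/2) * v n ^ 2) * Real.exp ((1/2) * v n ^ 2) = 1 := by
              rw [← Real.exp_add, show -(1/2) * v n ^ 2 + (1/2) * v n ^ 2 = 0 by ring,
                Real.exp_zero]
            linear_combination (-(v n ^ 2 / (v n ^ 2 + 1))) * hre
        _ ≤ (∫ u in Ioi (v n), phiSN u) * (v n * Real.exp ((1/2) * v n ^ 2)) := by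
            apply mul_le_mul_of_nonneg_right _ (le_of_lt hpos)
            exact hl
        _ = (∫ u in Ioi (v n), phiSN u) * v n * Real.exp ((1/2) * v n ^ 2) := by ring
    · filter_upwards [hv_top.eventually_gt_atTop 0] with n hv
      have hu := tail_upper_s19 hv
      have hpos : (0:ℝ) < v n * Real.exp ((1/2) * v n ^ 2) := by positivity
      calc (∫ u in Ioi (v n), phiSN u) * v n * Real.exp ((1/2) * v n ^ 2)
          = (∫ u in Ioi (v n), phiSN u) * (v n * Real.exp ((1/2) * v n ^ 2)) := by ring
        _ ≤ Real.exp (-(1/2) * v n ^ 2) / v n * (v n * Real.exp ((1/2) * v n ^ 2)) :=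
            mul_le_mul_of_nonneg_right hu (le_of_lt hpos)
        _ = 1 := by
            have hre : Real.exp (-(1/2) * v n ^ 2) * Real.exp ((1/2) * v n ^ 2) = 1 := by
              rw [← Real.exp_add, show -(1/2) * v n ^ 2 + (1/2) * v n ^ 2 = 0 by ring,
                Real.exp_zero]
            have hvne : v n ≠ 0 := ne_of_gt hv
            have h2 : Real.exp (-(1/2) * v n ^ 2) * (v n * Real.exp ((1/2) * v n ^ 2)) =
                (Real.exp (-(1/2) * v n ^ 2) * Real.exp ((1/2) * v n ^ 2)) * v n := by ring
            rw [div_mul_eq_mul_div, h2, hre, one_mul, div_self hvne]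
  -- assemble
  have t1 := hP.mul hQ
  rw [mul_one] at t1
  apply t1.congr'
  filter_upwards [hv_top.eventually_gt_atTop 0] with n hv
  rw [one_sub_cdf]
  have hexpne : Real.exp ((1/2) * v n ^ 2) ≠ 0 := Real.exp_ne_zero _
  have : Real.exp (-(1/2) * v n ^ 2) = (Real.exp ((1/2) * v n ^ 2))⁻¹ := by
    rw [← Real.exp_neg]
    congr 1
    ring
  rw [this]
  field_simp

lemma part1 (γ : ℝ) (hγ : 0 ≤ γ) (x z : ℝ) :
    Tendsto (fun n : ℕ =>
      (unz γ n x z - un n (x + γ - Real.sqrt (2 * γ) * z)) * Real.sqrt (2 * Real.log n))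
      atTop (nhds 0) := by
  rcases eq_or_lt_of_le hγ with hγ0 | hγpos
  · have : (fun n : ℕ =>
        (unz γ n x z - un n (x + γ - Real.sqrt (2 * γ) * z)) * Real.sqrt (2 * Real.log n))
        = fun _ => 0 := by
      funext n
      rw [← hγ0]
      simp [unz, rho, Real.sqrt_zero, zero_div]
    rw [this]
    exact tendsto_const_nhds
  -- γ > 0
  set y : ℝ := x - Real.sqrt (2 * γ) * z with hy
  have hLt : Tendsto (fun n : ℕ => Real.log n) atTop atTop := hLtop
  -- limit of the closed form
  have hrho0 : Tendsto (fun n : ℕ => rho γ n) atTop (nhds 0) :=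
    tendsto_const_nhds.div_atTop hLt
  have hq1 : Tendsto (fun n : ℕ => Real.sqrt (1 - rho γ n)) atTop (nhds 1) := by
    have h1 : Tendsto (fun n : ℕ => 1 - rho γ n) atTop (nhds (1 - 0)) :=
      tendsto_const_nhds.sub hrho0
    rw [sub_zero] at h1
    have := (Real.continuous_sqrt.continuousAt (x := 1)).tendsto.comp h1
    rwa [Real.sqrt_one] at this
  have hClim : Tendsto (fun n : ℕ =>
      (y - (Real.log (Real.log n) + Real.log (4 * π)) / 2) / (2 * Real.log n))
      atTop (nhds 0) := by
    have hloglog : Tendsto (fun n : ℕ => Real.log (Real.log n) / Real.log n) atTop (nhds 0) :=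
      (Real.isLittleO_log_id_atTop.tendsto_div_nhds_zero).comp hLt
    have hconst : Tendsto (fun n : ℕ => (Real.log n)⁻¹) atTop (nhds 0) :=
      tendsto_inv_atTop_zero.comp hLt
    have t1 : Tendsto (fun n : ℕ =>
        (y - Real.log (4 * π) / 2) / 2 * (Real.log n)⁻¹
          - Real.log (Real.log n) / Real.log n / 4) atTop
        (nhds ((y - Real.log (4 * π) / 2) / 2 * 0 - 0 / 4)) :=
      (tendsto_const_nhds.mul hconst).sub (hloglog.div_const 4)
    norm_num at t1
    apply t1.congr
    intro n
    ring
  have hmain : Tendsto (fun n : ℕ =>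
      2 * γ / (Real.sqrt (1 - rho γ n) * (1 + Real.sqrt (1 - rho γ n))) *
        (1 + (y - (Real.log (Real.log n) + Real.log (4 * π)) / 2) / (2 * Real.log n)) - γ)
      atTop (nhds 0) := by
    have hden : Tendsto (fun n : ℕ =>
        Real.sqrt (1 - rho γ n) * (1 + Real.sqrt (1 - rho γ n))) atTop (nhds (1 * (1 + 1))) :=
      hq1.mul (tendsto_const_nhds.add hq1)
    have hfrac : Tendsto (fun n : ℕ =>
        2 * γ / (Real.sqrt (1 - rho γ n) * (1 + Real.sqrt (1 - rho γ n)))) atTop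
        (nhds (2 * γ / (1 * (1 + 1)))) :=
      tendsto_const_nhds.div hden (by norm_num)
    have t2 := hfrac.mul ((tendsto_const_nhds :
        Tendsto (fun _ : ℕ => (1:ℝ)) atTop (nhds 1)).add hClim) |>.sub
      (tendsto_const_nhds : Tendsto (fun _ : ℕ => γ) atTop (nhds γ))
    norm_num at t2 ⊢
    exact t2
  apply hmain.congr'
  filter_upwards [hLt.eventually_ge_atTop (max 1 (γ + 1))] with n hn
  have hl1 : (1:ℝ) ≤ Real.log n := le_trans (le_max_left _ _) hn
  have hlγ : γ + 1 ≤ Real.log n := le_trans (le_max_right _ _) hn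
  have hLpos : 0 < Real.log n := lt_of_lt_of_le one_pos hl1
  have hLne : Real.log (n:ℕ) ≠ 0 := ne_of_gt hLpos
  have hrho_lt : rho γ n < 1 := by
    rw [rho, div_lt_one hLpos]
    linarith
  have hrho_pos : 0 < rho γ n := div_pos hγpos hLpos
  set q : ℝ := Real.sqrt (1 - rho γ n) with hqdef
  have hqpos : 0 < q := Real.sqrt_pos.2 (by linarith)
  have hqne : q ≠ 0 := ne_of_gt hqpos
  have h1qne : 1 + q ≠ 0 := by positivity
  have hq2 : q ^ 2 = 1 - rho γ n := Real.sq_sqrt (by linarith)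
  have hApos : 0 < Real.sqrt (2 * Real.log n) := Real.sqrt_pos.2 (by linarith)
  have hAne : Real.sqrt (2 * Real.log (n:ℕ)) ≠ 0 := ne_of_gt hApos
  have hA2 : Real.sqrt (2 * Real.log n) ^ 2 = 2 * Real.log n := Real.sq_sqrt (by linarith)
  have h2ne : Real.sqrt 2 ≠ 0 := by positivity
  have hsq : Real.sqrt (rho γ n) = Real.sqrt (2 * γ) / Real.sqrt (2 * Real.log n) := by
    rw [rho, Real.sqrt_div hγ, Real.sqrt_mul (by norm_num : (0:ℝ) ≤ 2) γ,
      Real.sqrt_mul (by norm_num : (0:ℝ) ≤ 2) (Real.log n),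
      mul_div_mul_left _ _ h2ne]
  have hxy : un n x - Real.sqrt (rho γ n) * z = un n y := by
    rw [hsq]
    simp only [un, hy]
    ring
  have e1 : unz γ n x z = q⁻¹ * un n y := by
    rw [unz, ← hqdef, hxy]
  have hyγ : x + γ - Real.sqrt (2 * γ) * z = y + γ := by rw [hy]; ring
  have e2 : un n (y + γ) = un n y + γ / Real.sqrt (2 * Real.log n) := by
    simp only [un]
    ring
  have h1q : (1 - q) * (1 + q) = γ / Real.log n := by
    have : γ / Real.log n = rho γ n := by rw [rho]
    rw [this]
    linear_combination -hq2
  have h5 : q⁻¹ - 1 = (γ / Real.log n) / (q * (1 + q)) := by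
    rw [← h1q]
    field_simp
  have e4 : un n y * Real.sqrt (2 * Real.log n) =
      y + 2 * Real.log n - (Real.log (Real.log n) + Real.log (4 * π)) / 2 := by
    have t1 : y / Real.sqrt (2 * Real.log n) * Real.sqrt (2 * Real.log n) = y :=
      div_mul_cancel₀ y hAne
    have t2 : Real.sqrt (2 * Real.log n) * Real.sqrt (2 * Real.log n) = 2 * Real.log n :=
      Real.mul_self_sqrt (by linarith)
    have t3 : (Real.log (Real.log n) + Real.log (4 * π)) / (2 * Real.sqrt (2 * Real.log n)) *
        Real.sqrt (2 * Real.log n) = (Real.log (Real.log n) + Real.log (4 * π)) / 2 := by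
      rw [div_mul_eq_mul_div, mul_comm (2:ℝ) (Real.sqrt (2 * Real.log n)), ← div_div,
        mul_div_assoc, div_self hAne, mul_one]
    simp only [un]
    rw [add_mul, sub_mul, t1, t2, t3]
    ring
  rw [hyγ, e1, e2]
  symm
  calc (q⁻¹ * un n y - (un n y + γ / Real.sqrt (2 * Real.log n))) * Real.sqrt (2 * Real.log n)
      = (q⁻¹ - 1) * (un n y * Real.sqrt (2 * Real.log n)) - γ := by
        field_simp
        ring
    _ = (q⁻¹ - 1) * (y + 2 * Real.log n - (Real.log (Real.log n) + Real.log (4 * π)) / 2) - γ := by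
        rw [e4]
    _ = 2 * γ / (q * (1 + q)) *
          (1 + (y - (Real.log (Real.log n) + Real.log (4 * π)) / 2) / (2 * Real.log n)) - γ := by
        rw [h5]
        field_simp
        ring

theorem stmt19 (γ : ℝ) (hγ : 0 ≤ γ) (x z : ℝ) :
    -- `u_n(x,z) = u_n(x + γ - √(2γ) z) + o(a_n⁻¹)`
    Tendsto (fun n : ℕ =>
        (unz γ n x z - un n (x + γ - Real.sqrt (2 * γ) * z)) * Real.sqrt (2 * Real.log n))
      atTop (nhds 0) ∧
    -- `n (1 - Φ(u_n(x,z))) → exp(-x - γ + √(2γ) z)`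
    Tendsto (fun n : ℕ => (n : ℝ) * (1 - stdNormalCDF (unz γ n x z)))
      atTop (nhds (Real.exp (-x - γ + Real.sqrt (2 * γ) * z))) := by
  have h1 := part1 γ hγ x z
  refine ⟨h1, ?_⟩
  have h2 := key_limit (x + γ - Real.sqrt (2 * γ) * z) (fun n => unz γ n x z) h1
  rwa [show -(x + γ - Real.sqrt (2 * γ) * z) = -x - γ + Real.sqrt (2 * γ) * z by ring] at h2
end
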